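/- Suppose $y_{\text{truth}} = \mu + \kappa u + \tilde\epsilon$ and for each $\lambda \in [0,1)$ let $y^{(\lambda)} = \mu + \frac{\gamma(\lambda)}{2} u$ with $\gamma(\lambda) = \lambda/(1-\lambda)$, where $\mu, u$ are random vectors, $\tilde\epsilon$ is mean-zero and independent of $(\mu, u)$, $\kappa > 0$, and $\mathbb{E}\|u\|^2 > 0$. Then there exists $\lambda > 0$ such that $\mathbb{E}\|y^{(\lambda)} - y_{\text{truth}}\|^2 < \mathbb{E}\|y^{(0)} - y_{\text{truth}}\|^2$. -/

import Mathlib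

open MeasureTheory

/-! Take `λ = 2κ / (1 + 2κ)`, so that `γ(λ) / 2 = κ`: the corrected prediction then misses the truth
by `-ε̃` alone, while the uncorrected one misses it by `-(κ u + ε̃)`. Since `u` and `ε̃` are
uncorrelated, expanding the square gives `E‖κ u + ε̃‖² = κ² E‖u‖² + E‖ε̃‖² > E‖ε̃‖²`. -/

section SquareExpansion

variable {Ω E : Type*} [MeasurableSpace Ω] {m : Measure Ω}
  [NormedAddCommGroup E] [InnerProductSpace ℝ E] {f g : Ω → E}

theorem norm_smul_add_sq_real (c : ℝ) (x y : E) :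
    ‖c • x + y‖ ^ 2 = c ^ 2 * ‖x‖ ^ 2 + 2 * c * inner ℝ x y + ‖y‖ ^ 2 := by
  rw [norm_add_sq_real, norm_smul, real_inner_smul_left, mul_pow, Real.norm_eq_abs, sq_abs]
  ring

theorem integral_norm_smul_add_sq (c : ℝ)
    (hf : Integrable (fun ω => ‖f ω‖ ^ 2) m) (hg : Integrable (fun ω => ‖g ω‖ ^ 2) m)
    (hfg : Integrable (fun ω => inner ℝ (f ω) (g ω)) m) :
    ∫ ω, ‖c • f ω + g ω‖ ^ 2 ∂m =
      c ^ 2 * ∫ ω, ‖f ω‖ ^ 2 ∂m + 2 * c * ∫ ω, inner ℝ (f ω) (g ω) ∂m + ∫ ω, ‖g ω‖ ^ 2 ∂m := by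
  simp_rw [norm_smul_add_sq_real]
  rw [integral_add (by exact (hf.const_mul _).add (hfg.const_mul _)) hg,
    integral_add (hf.const_mul _) (hfg.const_mul _), integral_const_mul, integral_const_mul]

theorem integral_norm_sq_lt_integral_norm_smul_add_sq {c : ℝ} (hc : c ≠ 0)
    (hf : Integrable (fun ω => ‖f ω‖ ^ 2) m) (hg : Integrable (fun ω => ‖g ω‖ ^ 2) m)
    (hfg : Integrable (fun ω => inner ℝ (f ω) (g ω)) m)
    (horth : ∫ ω, inner ℝ (f ω) (g ω) ∂m = 0) (hf_pos : 0 < ∫ ω, ‖f ω‖ ^ 2 ∂m) :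
    ∫ ω, ‖g ω‖ ^ 2 ∂m < ∫ ω, ‖c • f ω + g ω‖ ^ 2 ∂m := by
  rw [integral_norm_smul_add_sq c hf hg hfg, horth]
  linarith [mul_pos (sq_pos_of_ne_zero hc) hf_pos]

end SquareExpansion

theorem stmt4_general (d : ℕ)
    (Ω : Type*) [MeasureSpace Ω]
    (μ u ε : Ω → EuclideanSpace ℝ (Fin d))
    (κ : ℝ) (hκ : 0 < κ)
    (γ : ℝ → ℝ) (hγ : ∀ l, γ l = l / (1 - l))
    (ytruth : Ω → EuclideanSpace ℝ (Fin d))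
    (hyt : ∀ ω, ytruth ω = μ ω + κ • u ω + ε ω)
    (y : ℝ → Ω → EuclideanSpace ℝ (Fin d))
    (hy : ∀ l ω, y l ω = μ ω + (γ l / 2) • u ω)
    (hcross : ∫ ω, (inner ℝ (u ω) (ε ω) : ℝ) = 0)
    (hu2 : Integrable (fun ω => ‖u ω‖ ^ 2))
    (hε2 : Integrable (fun ω => ‖ε ω‖ ^ 2))
    (hcrossInt : Integrable (fun ω => (inner ℝ (u ω) (ε ω) : ℝ)))
    (hu : 0 < ∫ ω, ‖u ω‖ ^ 2) :
    ∃ l : ℝ, 0 < l ∧ l < 1 ∧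
      ∫ ω, ‖y l ω - ytruth ω‖ ^ 2 < ∫ ω, ‖y 0 ω - ytruth ω‖ ^ 2 := by
  have hden : 0 < 1 + 2 * κ := by positivity
  refine ⟨2 * κ / (1 + 2 * κ), by positivity, (div_lt_one hden).mpr (by linarith), ?_⟩
  have hγκ : γ (2 * κ / (1 + 2 * κ)) / 2 = κ := by
    rw [hγ]
    field_simp
    ring
  have herr : ∀ ω, y (2 * κ / (1 + 2 * κ)) ω - ytruth ω = -ε ω := fun ω => by
    rw [hy, hyt, hγκ]
    abel
  have herr₀ : ∀ ω, y 0 ω - ytruth ω = -(κ • u ω + ε ω) := fun ω => by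
    rw [hy, hyt, hγ]
    simp only [sub_zero, div_one, zero_div, zero_smul, add_zero]
    abel
  simp only [herr, herr₀, norm_neg]
  exact integral_norm_sq_lt_integral_norm_smul_add_sq hκ.ne' hu2 hε2 hcrossInt hcross hu

/-- Theorem 1 of the paper: with y_truth = μ + κ u + ε̃ and
y^{(λ)} = μ + (γ(λ)/2) u, γ(λ) = λ/(1-λ), ε̃ mean zero and uncorrelated with u
(from independence), κ > 0 and E‖u‖² > 0, there exists λ > 0 with
E‖y^{(λ)} - y_truth‖² < E‖y^{(0)} - y_truth‖². -/
theorem stmt4 (d : ℕ)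
    (Ω : Type*) [MeasureSpace Ω] [IsProbabilityMeasure (volume : Measure Ω)]
    (μ u ε : Ω → EuclideanSpace ℝ (Fin d))
    (κ : ℝ) (hκ : 0 < κ)
    (γ : ℝ → ℝ) (hγ : ∀ l, γ l = l / (1 - l))
    (ytruth : Ω → EuclideanSpace ℝ (Fin d))
    (hyt : ∀ ω, ytruth ω = μ ω + κ • u ω + ε ω)
    (y : ℝ → Ω → EuclideanSpace ℝ (Fin d))
    (hy : ∀ l ω, y l ω = μ ω + (γ l / 2) • u ω)
    (hε0 : ∫ ω, ε ω = 0)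
    (hcross : ∫ ω, (inner ℝ (u ω) (ε ω) : ℝ) = 0)
    (hu2 : Integrable (fun ω => ‖u ω‖ ^ 2))
    (hε2 : Integrable (fun ω => ‖ε ω‖ ^ 2))
    (hcrossInt : Integrable (fun ω => (inner ℝ (u ω) (ε ω) : ℝ)))
    (hu : 0 < ∫ ω, ‖u ω‖ ^ 2) :
    ∃ l : ℝ, 0 < l ∧ l < 1 ∧
      ∫ ω, ‖y l ω - ytruth ω‖ ^ 2 < ∫ ω, ‖y 0 ω - ytruth ω‖ ^ 2 :=
  stmt4_general d Ω μ u ε κ hκ γ hγ ytruth hyt y hy hcross hu2 hε2 hcrossInt hu
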